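/- Theorem 1 (Soundness of PoLoc, supremum form). In the PoLoc setup, let f := n − H.card and assume f < n. For each unit vector v ∈ E define ρ(v) to be the (f+1)-th smallest element of the multiset {R(C i, d̂ i, P̃, v) : i ∈ Fin n}. Then dist P P̃ ≤ sSup {ρ(v) : v ∈ E, ‖v‖ = 1}; in particular this set of reals is nonempty and bounded above (each R(C i, d̂ i, P̃, v) is at most d̂ i + ‖C i − P̃‖). -/

import Mathlib

open scoped Classical

/-- The plane. -/
local notation "E" => EuclideanSpace ℝ (Fin 2)

/-- Directional uncertainty `R(C, d̂, P̃, u) = s + sqrt (d̂² − d̃² + s²)`,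
where `d̃ = ‖C − P̃‖` and `s = ⟪C − P̃, u⟫_ℝ`. -/
noncomputable def dirUnc (C Pt : EuclideanSpace ℝ (Fin 2)) (dhat : ℝ)
    (u : EuclideanSpace ℝ (Fin 2)) : ℝ :=
  (inner ℝ (C - Pt) u : ℝ) +
    Real.sqrt (dhat ^ 2 - ‖C - Pt‖ ^ 2 + (inner ℝ (C - Pt) u : ℝ) ^ 2)

/-- The `(k+1)`-th smallest (0-indexed `k`-th) value of a finite family of
reals: the value at position `k` after sorting in nondecreasing order. -/
noncomputable def kthSmallest {n : ℕ} (g : Fin n → ℝ) (k : Fin n) : ℝ :=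
  (g ∘ Tuple.sort g) k

/-!
Write `D = ‖P − P̃‖` and `u` for the unit vector from `P̃` towards `P`, so that
`P = P̃ + D u`. For an honest challenger, `‖(C − P̃) − D u‖ ≤ d̂`; expanding the square gives
`(D − s)² ≤ d̂² − d̃² + s²`, i.e. `D` lies below the larger root `R(C, d̂, P̃, u)`. At most `f`
challengers are dishonest, so at most `f` of the values `R(C i, d̂ i, P̃, u)` lie below `D`, and
hence `D ≤ ρ(u) ≤ sSup ρ`. Boundedness comes from `R(C, d̂, P̃, v) ≤ ‖C − P̃‖ + |d̂|`.
-/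

open Finset

section InnerProductSpace

variable {F : Type*} [NormedAddCommGroup F] [InnerProductSpace ℝ F]

theorem le_inner_add_sqrt_of_norm_sub_smul_le {c u : F} (hu : ‖u‖ = 1) {t d : ℝ}
    (h : ‖c - t • u‖ ≤ d) :
    t ≤ inner ℝ c u + √(d ^ 2 - ‖c‖ ^ 2 + inner ℝ c u ^ 2) := by
  have hexpand : ‖c - t • u‖ ^ 2 = ‖c‖ ^ 2 - 2 * t * inner ℝ c u + t ^ 2 := by
    rw [norm_sub_sq_real, real_inner_smul_right, norm_smul, hu, Real.norm_eq_abs, mul_one,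
      sq_abs]
    ring
  have hsq : ‖c - t • u‖ ^ 2 ≤ d ^ 2 := pow_le_pow_left₀ (norm_nonneg _) h 2
  have hroot : |t - inner ℝ c u| ≤ √(d ^ 2 - ‖c‖ ^ 2 + inner ℝ c u ^ 2) :=
    Real.abs_le_sqrt (by nlinarith)
  linarith [le_abs_self (t - inner ℝ c u)]

theorem inner_add_sqrt_le_norm_add_abs {u : F} (hu : ‖u‖ ≤ 1) (c : F) (d : ℝ) :
    inner ℝ c u + √(d ^ 2 - ‖c‖ ^ 2 + inner ℝ c u ^ 2) ≤ ‖c‖ + |d| := by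
  have hinner : |inner ℝ c u| ≤ ‖c‖ :=
    (abs_real_inner_le_norm c u).trans (mul_le_of_le_one_right (norm_nonneg c) hu)
  have hsqrt : √(d ^ 2 - ‖c‖ ^ 2 + inner ℝ c u ^ 2) ≤ |d| := by
    rw [← Real.sqrt_sq_eq_abs]
    apply Real.sqrt_le_sqrt
    nlinarith [sq_abs (inner ℝ c u), abs_nonneg (inner ℝ c u)]
  linarith [le_abs_self (inner ℝ c u)]

end InnerProductSpace

theorem dirUnc_le_norm_add_abs (C Pt : E) (dhat : ℝ) {v : E} (hv : ‖v‖ ≤ 1) :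
    dirUnc C Pt dhat v ≤ ‖C - Pt‖ + |dhat| :=
  inner_add_sqrt_le_norm_add_abs hv _ _

theorem dist_le_dirUnc {C Pt P : E} {dhat : ℝ} (hne : P ≠ Pt) (h : dist C P ≤ dhat) :
    dist P Pt ≤ dirUnc C Pt dhat (‖P - Pt‖⁻¹ • (P - Pt)) := by
  have hsub : P - Pt ≠ 0 := sub_ne_zero.mpr hne
  have hCP : C - Pt - ‖P - Pt‖ • ‖P - Pt‖⁻¹ • (P - Pt) = C - P := by
    rw [smul_inv_smul₀ (norm_ne_zero_iff.mpr hsub)]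
    abel
  have hu : ‖‖P - Pt‖⁻¹ • (P - Pt)‖ = 1 := norm_smul_inv_norm (𝕜 := ℝ) hsub
  rw [dist_eq_norm]
  refine le_inner_add_sqrt_of_norm_sub_smul_le hu ?_
  rwa [hCP, ← dist_eq_norm]

theorem le_apply_sort_of_card_filter_lt_le {α : Type*} [LinearOrder α] {n : ℕ}
    (g : Fin n → α) (k : Fin n) {a : α} (h : (univ.filter fun i => g i < a).card ≤ k) :
    a ≤ g (Tuple.sort g k) := by
  by_contra! hlt
  have hsub : (Iic k).image (Tuple.sort g) ⊆ univ.filter fun i => g i < a := by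
    simp only [subset_iff, mem_image, mem_Iic, mem_filter, mem_univ, true_and]
    rintro _ ⟨j, hj, rfl⟩
    exact (Tuple.monotone_sort g hj).trans_lt hlt
  have hcard := card_le_card hsub
  rw [card_image_of_injective _ (Tuple.sort g).injective, Fin.card_Iic] at hcard
  omega

theorem card_filter_le_card_compl {ι : Type*} [Fintype ι] (p : ι → Prop) (H : Finset ι)
    (hH : ∀ i ∈ H, ¬ p i) : (univ.filter p).card ≤ Fintype.card ι - H.card := by
  rw [← card_compl]
  exact card_le_card fun i hi => mem_compl.mpr fun hiH => hH i hiH (mem_filter.mp hi).2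

/-- Theorem 1 (Soundness of PoLoc, supremum form): letting `ρ(v)` be the
`(f+1)`-th smallest directional uncertainty in direction `v`, the true
deviation of Waldo is at most `sSup {ρ(v) : ‖v‖ = 1}`; in particular this set
of reals is nonempty and bounded above. -/
theorem poloc_soundness_sup (n : ℕ) (C : Fin n → E) (dhat : Fin n → ℝ)
    (Pt P : E) (hne : P ≠ Pt) (H : Finset (Fin n))
    (hH : ∀ i ∈ H, dist (C i) P ≤ dhat i) (hf : n - H.card < n) :
    let ρ : E → ℝ := fun v =>
      kthSmallest (fun i => dirUnc (C i) Pt (dhat i) v) ⟨n - H.card, hf⟩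
    let S : Set ℝ := {r : ℝ | ∃ v : E, ‖v‖ = 1 ∧ r = ρ v}
    S.Nonempty ∧ BddAbove S ∧ dist P Pt ≤ sSup S := by
  intro ρ S
  set u : E := ‖P - Pt‖⁻¹ • (P - Pt)
  have hu : ‖u‖ = 1 := norm_smul_inv_norm (𝕜 := ℝ) (sub_ne_zero.mpr hne)
  have hbdd : BddAbove S := by
    refine ⟨∑ i, (‖C i - Pt‖ + |dhat i|), ?_⟩
    rintro _ ⟨v, hv, rfl⟩
    exact (dirUnc_le_norm_add_abs _ _ _ hv.le).trans
      (single_le_sum (f := fun i => ‖C i - Pt‖ + |dhat i|) (fun i _ => by positivity)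
        (mem_univ _))
  have hρu : dist P Pt ≤ ρ u := by
    refine le_apply_sort_of_card_filter_lt_le (fun i => dirUnc (C i) Pt (dhat i) u) _ ?_
    simpa using card_filter_le_card_compl _ H fun i hi =>
      not_lt.mpr (dist_le_dirUnc hne (hH i hi))
  exact ⟨⟨ρ u, u, hu, rfl⟩, hbdd, hρu.trans (le_csSup hbdd ⟨u, hu, rfl⟩)⟩
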